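/- arXiv:2308.03942 — 4 statements merged into one kernel-verified Lean document; each statement's English description precedes it below -/
import Mathlib

section
/- Let (F, γ) be a functor with anomaly from a category C to a k-linear category D, and let (F̃, γ) be its unitalized functor with anomaly. Then (F̃, γ) is a unital functor with anomaly: for every object X of C, γ_{X,X}·F̃(id_X) = id_{F̃(X)}, and for every composable pair (g, f) of morphisms of C, F̃(g∘f) = γ_{g,f}·(F̃(g)∘F̃(f)). -/
open CategoryTheory

/-- The unitalized functor with anomaly `(F̃, γ)` of a functor with
anomaly `(F, γ)` is a unital functor with anomaly: `γ_{X,X} • F̃(id_X) = id` and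
`F̃(g∘f) = γ_{g,f} • (F̃(g) ∘ F̃(f))`.  Here `F̃(f) = p_Y ∘ F(f) ∘ q_X` for chosen
splittings `p_X : F(X) → F̃(X)`, `q_X : F̃(X) → F(X)` of the idempotents
`Π_X = γ_{X,X} • F(id_X)` (so `p∘q = id` and `q∘p = Π`). -/
theorem stmt_3 {k : Type*} [Field k] {C : Type*} [Category C]
    {D : Type*} [Category D] [Preadditive D] [Linear k D]
    (γ : ∀ {X Y Z : C}, (X ⟶ Y) → (Y ⟶ Z) → kˣ)
    (hcocycle : ∀ {X Y Z W : C} (f : X ⟶ Y) (g : Y ⟶ Z) (h : Z ⟶ W),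
      γ f (g ≫ h) * γ g h = γ (f ≫ g) h * γ f g)
    (Fobj : C → D) (Fmap : ∀ {X Y : C}, (X ⟶ Y) → (Fobj X ⟶ Fobj Y))
    (hF : ∀ {X Y Z : C} (f : X ⟶ Y) (g : Y ⟶ Z),
      Fmap (f ≫ g) = (γ f g : k) • (Fmap f ≫ Fmap g))
    (Ftobj : C → D)
    (p : ∀ X : C, Fobj X ⟶ Ftobj X) (q : ∀ X : C, Ftobj X ⟶ Fobj X)
    (hpq : ∀ X : C, q X ≫ p X = 𝟙 (Ftobj X))
    (hqp : ∀ X : C, p X ≫ q X = (γ (𝟙 X) (𝟙 X) : k) • Fmap (𝟙 X)) :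
    (∀ X : C, (γ (𝟙 X) (𝟙 X) : k) • (q X ≫ Fmap (𝟙 X) ≫ p X) = 𝟙 (Ftobj X)) ∧
    (∀ {X Y Z : C} (f : X ⟶ Y) (g : Y ⟶ Z),
      q X ≫ Fmap (f ≫ g) ≫ p Z =
        (γ f g : k) • ((q X ≫ Fmap f ≫ p Y) ≫ (q Y ≫ Fmap g ≫ p Z))) := by
  -- γ f (𝟙 Y) = γ (𝟙 Y) (𝟙 Y)
  have hγR : ∀ {X Y : C} (f : X ⟶ Y), γ f (𝟙 Y) = γ (𝟙 Y) (𝟙 Y) := by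
    intro X Y f
    have h := hcocycle f (𝟙 Y) (𝟙 Y)
    simp only [Category.comp_id, Category.id_comp] at h
    exact (mul_left_cancel h).symm
  have hγL : ∀ {X Y : C} (f : X ⟶ Y), γ (𝟙 X) f = γ (𝟙 X) (𝟙 X) := by
    intro X Y f
    have h := hcocycle (𝟙 X) (𝟙 X) f
    simp only [Category.comp_id, Category.id_comp] at h
    exact mul_left_cancel h
  -- absorption on the right: Fmap f ≫ Π_Y = Fmap f
  have habsR : ∀ {X Y : C} (f : X ⟶ Y),
      Fmap f ≫ ((γ (𝟙 Y) (𝟙 Y) : k) • Fmap (𝟙 Y)) = Fmap f := by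
    intro X Y f
    rw [Linear.comp_smul, ← hγR f, ← hF f (𝟙 Y), Category.comp_id]
  have habsL : ∀ {X Y : C} (f : X ⟶ Y),
      ((γ (𝟙 X) (𝟙 X) : k) • Fmap (𝟙 X)) ≫ Fmap f = Fmap f := by
    intro X Y f
    rw [Linear.smul_comp, ← hγL f, ← hF (𝟙 X) f, Category.id_comp]
  constructor
  · intro X
    calc (γ (𝟙 X) (𝟙 X) : k) • (q X ≫ Fmap (𝟙 X) ≫ p X)
        = q X ≫ ((γ (𝟙 X) (𝟙 X) : k) • Fmap (𝟙 X)) ≫ p X := by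
          simp only [Linear.comp_smul, Linear.smul_comp]
      _ = q X ≫ (p X ≫ q X) ≫ p X := by rw [hqp]
      _ = (q X ≫ p X) ≫ (q X ≫ p X) := by simp only [Category.assoc]
      _ = 𝟙 (Ftobj X) := by rw [hpq, Category.comp_id]
  · intro X Y Z f g
    calc q X ≫ Fmap (f ≫ g) ≫ p Z
        = (γ f g : k) • (q X ≫ (Fmap f ≫ Fmap g) ≫ p Z) := by
          rw [hF f g]; simp only [Linear.comp_smul, Linear.smul_comp]
      _ = (γ f g : k) • (q X ≫ ((Fmap f ≫ ((γ (𝟙 Y) (𝟙 Y) : k) • Fmap (𝟙 Y))) ≫ Fmap g) ≫ p Z) := by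
          rw [habsR]
      _ = (γ f g : k) • ((q X ≫ Fmap f ≫ p Y) ≫ (q Y ≫ Fmap g ≫ p Z)) := by
          rw [← hqp]; simp only [Category.assoc]
end

section
/- Let (F, F₂, F₀, γ) be a monoidal functor with anomaly from a strict monoidal category C to a k-linear strict monoidal category D with k-bilinear tensor product, with chosen splittings p_X, q_X of the idempotents Π_X, and let F̃ be the unitalized functor with F̃₂(X,Y) := p_{X⊗Y}∘F₂(X,Y)∘(q_X⊗q_Y). Then F̃₂ is natural with respect to F̃: for all morphisms f : X → X' and g : Y → Y' of C, F̃₂(X',Y')∘(F̃(f)⊗F̃(g)) = F̃(f⊗g)∘F̃₂(X,Y). -/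
/-!
The cocycle identity for `(h, 𝟙, 𝟙)` and `(𝟙, 𝟙, h)` gives `γ_{𝟙,𝟙} = γ_{h,𝟙}` and
`γ_{𝟙,𝟙} = γ_{𝟙,h}`, so `Π = γ_{𝟙,𝟙} • F(𝟙)` acts trivially on every `F(h)` from either side.
Hence the idempotent `q ∘ p = Π` in the middle of both composites can be dropped, and the claim
reduces to the naturality of `F₂`.
-/

open CategoryTheory MonoidalCategory

section Cocycle

variable {G : Type*} [Group G] {C : Type*} [Category C]
  (γ : ∀ {X Y Z : C}, (X ⟶ Y) → (Y ⟶ Z) → G)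
  (hcocycle : ∀ {X Y Z W : C} (f : X ⟶ Y) (g : Y ⟶ Z) (h : Z ⟶ W),
    γ f (g ≫ h) * γ g h = γ (f ≫ g) h * γ f g)
include hcocycle

theorem cocycle_id_id_eq_comp_id {A B : C} (h : A ⟶ B) : γ (𝟙 B) (𝟙 B) = γ h (𝟙 B) := by
  simpa using hcocycle h (𝟙 B) (𝟙 B)

theorem cocycle_id_id_eq_id_comp {A B : C} (h : A ⟶ B) : γ (𝟙 A) (𝟙 A) = γ (𝟙 A) h := by
  simpa using (hcocycle (𝟙 A) (𝟙 A) h).symm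

end Cocycle

section AnomalousFunctor

variable {k : Type*} [Semiring k] {C : Type*} [Category C]
  {D : Type*} [Category D] [Preadditive D] [Linear k D]
  (γ : ∀ {X Y Z : C}, (X ⟶ Y) → (Y ⟶ Z) → kˣ)
  (hcocycle : ∀ {X Y Z W : C} (f : X ⟶ Y) (g : Y ⟶ Z) (h : Z ⟶ W),
    γ f (g ≫ h) * γ g h = γ (f ≫ g) h * γ f g)
  {Fobj : C → D} (Fmap : ∀ {X Y : C}, (X ⟶ Y) → (Fobj X ⟶ Fobj Y))
  (hF : ∀ {X Y Z : C} (f : X ⟶ Y) (g : Y ⟶ Z),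
    Fmap (f ≫ g) = (γ f g : k) • (Fmap f ≫ Fmap g))
include hcocycle hF

theorem map_comp_smul_map_id {A B : C} (h : A ⟶ B) :
    Fmap h ≫ ((γ (𝟙 B) (𝟙 B) : k) • Fmap (𝟙 B)) = Fmap h := by
  rw [Linear.comp_smul, cocycle_id_id_eq_comp_id γ hcocycle h, ← hF, Category.comp_id]

theorem smul_map_id_comp_map {A B : C} (h : A ⟶ B) :
    ((γ (𝟙 A) (𝟙 A) : k) • Fmap (𝟙 A)) ≫ Fmap h = Fmap h := by
  rw [Linear.smul_comp, cocycle_id_id_eq_id_comp γ hcocycle h, ← hF, Category.id_comp]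

variable {Ftobj : C → D} {p : ∀ X : C, Fobj X ⟶ Ftobj X} {q : ∀ X : C, Ftobj X ⟶ Fobj X}
  (hqp : ∀ X : C, p X ≫ q X = (γ (𝟙 X) (𝟙 X) : k) • Fmap (𝟙 X))
include hqp

theorem map_comp_split {A B : C} (h : A ⟶ B) : Fmap h ≫ p B ≫ q B = Fmap h := by
  rw [hqp, map_comp_smul_map_id γ hcocycle Fmap hF]

theorem split_comp_map {A B : C} (h : A ⟶ B) : p A ≫ q A ≫ Fmap h = Fmap h := by
  rw [← Category.assoc, hqp, smul_map_id_comp_map γ hcocycle Fmap hF]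

end AnomalousFunctor

theorem stmt_10_general {k : Type*} [Field k]
    {C : Type*} [Category C] [MonoidalCategory C]
    {D : Type*} [Category D] [Preadditive D] [Linear k D] [MonoidalCategory D]
    (γ : ∀ {X Y Z : C}, (X ⟶ Y) → (Y ⟶ Z) → kˣ)
    (hcocycle : ∀ {X Y Z W : C} (f : X ⟶ Y) (g : Y ⟶ Z) (h : Z ⟶ W),
      γ f (g ≫ h) * γ g h = γ (f ≫ g) h * γ f g)
    (Fobj : C → D) (Fmap : ∀ {X Y : C}, (X ⟶ Y) → (Fobj X ⟶ Fobj Y))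
    (hF : ∀ {X Y Z : C} (f : X ⟶ Y) (g : Y ⟶ Z),
      Fmap (f ≫ g) = (γ f g : k) • (Fmap f ≫ Fmap g))
    (F₂ : ∀ X Y : C, Fobj X ⊗ Fobj Y ⟶ Fobj (X ⊗ Y))
    (hF₂nat : ∀ {X X' Y Y' : C} (f : X ⟶ X') (g : Y ⟶ Y'),
      F₂ X Y ≫ Fmap (f ⊗ₘ g) = (Fmap f ⊗ₘ Fmap g) ≫ F₂ X' Y')
    (Ftobj : C → D)
    (p : ∀ X : C, Fobj X ⟶ Ftobj X) (q : ∀ X : C, Ftobj X ⟶ Fobj X)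
    (hqp : ∀ X : C, p X ≫ q X = (γ (𝟙 X) (𝟙 X) : k) • Fmap (𝟙 X))
    :
    ∀ {X X' Y Y' : C} (f : X ⟶ X') (g : Y ⟶ Y'),
      ((q X ≫ Fmap f ≫ p X') ⊗ₘ (q Y ≫ Fmap g ≫ p Y')) ≫
          ((q X' ⊗ₘ q Y') ≫ F₂ X' Y' ≫ p (X' ⊗ Y')) =
        ((q X ⊗ₘ q Y) ≫ F₂ X Y ≫ p (X ⊗ Y)) ≫
          (q (X ⊗ Y) ≫ Fmap (f ⊗ₘ g) ≫ p (X' ⊗ Y')) := by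
  intro X X' Y Y' f g
  have hmap {A B : C} (h : A ⟶ B) : Fmap h ≫ p B ≫ q B = Fmap h :=
    map_comp_split γ hcocycle Fmap hF hqp h
  calc _ = ((q X ≫ Fmap f ≫ p X' ≫ q X') ⊗ₘ (q Y ≫ Fmap g ≫ p Y' ≫ q Y')) ≫
          F₂ X' Y' ≫ p (X' ⊗ Y') := by
        simp only [Category.assoc, tensorHom_comp_tensorHom_assoc]
    _ = (q X ⊗ₘ q Y) ≫ (Fmap f ⊗ₘ Fmap g) ≫ F₂ X' Y' ≫ p (X' ⊗ Y') := by
        rw [hmap, hmap, tensorHom_comp_tensorHom_assoc]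
    _ = (q X ⊗ₘ q Y) ≫ F₂ X Y ≫ p (X ⊗ Y) ≫ q (X ⊗ Y) ≫ Fmap (f ⊗ₘ g) ≫ p (X' ⊗ Y') := by
        rw [reassoc_of% split_comp_map γ hcocycle Fmap hF hqp (f ⊗ₘ g), reassoc_of% hF₂nat f g]
    _ = _ := by simp only [Category.assoc]

/-- With `F̃(f) = p ∘ F(f) ∘ q` and
`F̃₂(X,Y) = p_{X⊗Y} ∘ F₂(X,Y) ∘ (q_X ⊗ q_Y)`, the family `F̃₂` is natural with
respect to `F̃`: `F̃₂(X',Y') ∘ (F̃(f) ⊗ F̃(g)) = F̃(f⊗g) ∘ F̃₂(X,Y)`. -/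
theorem stmt_10 {k : Type*} [Field k]
    {C : Type*} [Category C] [MonoidalCategory C]
    {D : Type*} [Category D] [Preadditive D] [Linear k D] [MonoidalCategory D]
    [MonoidalPreadditive D] [MonoidalLinear k D]
    (γ : ∀ {X Y Z : C}, (X ⟶ Y) → (Y ⟶ Z) → kˣ)
    (hcocycle : ∀ {X Y Z W : C} (f : X ⟶ Y) (g : Y ⟶ Z) (h : Z ⟶ W),
      γ f (g ≫ h) * γ g h = γ (f ≫ g) h * γ f g)
    (hγmon : ∀ {X Y Z X' Y' Z' : C} (f : X ⟶ Y) (g : Y ⟶ Z)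
      (f' : X' ⟶ Y') (g' : Y' ⟶ Z'),
      γ (f ⊗ₘ f') (g ⊗ₘ g') = γ f g * γ f' g')
    (Fobj : C → D) (Fmap : ∀ {X Y : C}, (X ⟶ Y) → (Fobj X ⟶ Fobj Y))
    (hF : ∀ {X Y Z : C} (f : X ⟶ Y) (g : Y ⟶ Z),
      Fmap (f ≫ g) = (γ f g : k) • (Fmap f ≫ Fmap g))
    (F₂ : ∀ X Y : C, Fobj X ⊗ Fobj Y ⟶ Fobj (X ⊗ Y))
    (F₀ : 𝟙_ D ⟶ Fobj (𝟙_ C))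
    (hF₂nat : ∀ {X X' Y Y' : C} (f : X ⟶ X') (g : Y ⟶ Y'),
      F₂ X Y ≫ Fmap (f ⊗ₘ g) = (Fmap f ⊗ₘ Fmap g) ≫ F₂ X' Y')
    (hassoc : ∀ X Y Z : C,
      (F₂ X Y ⊗ₘ 𝟙 (Fobj Z)) ≫ F₂ (X ⊗ Y) Z ≫ Fmap (α_ X Y Z).hom =
        (α_ (Fobj X) (Fobj Y) (Fobj Z)).hom ≫ (𝟙 (Fobj X) ⊗ₘ F₂ Y Z) ≫ F₂ X (Y ⊗ Z))
    (hrunit : ∀ X : C,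
      (𝟙 (Fobj X) ⊗ₘ F₀) ≫ F₂ X (𝟙_ C) ≫ Fmap (ρ_ X).hom = (ρ_ (Fobj X)).hom)
    (hlunit : ∀ X : C,
      (F₀ ⊗ₘ 𝟙 (Fobj X)) ≫ F₂ (𝟙_ C) X ≫ Fmap (λ_ X).hom = (λ_ (Fobj X)).hom)
    (Ftobj : C → D)
    (p : ∀ X : C, Fobj X ⟶ Ftobj X) (q : ∀ X : C, Ftobj X ⟶ Fobj X)
    (hpq : ∀ X : C, q X ≫ p X = 𝟙 (Ftobj X))
    (hqp : ∀ X : C, p X ≫ q X = (γ (𝟙 X) (𝟙 X) : k) • Fmap (𝟙 X))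
    :
    ∀ {X X' Y Y' : C} (f : X ⟶ X') (g : Y ⟶ Y'),
      ((q X ≫ Fmap f ≫ p X') ⊗ₘ (q Y ≫ Fmap g ≫ p Y')) ≫
          ((q X' ⊗ₘ q Y') ≫ F₂ X' Y' ≫ p (X' ⊗ Y')) =
        ((q X ⊗ₘ q Y) ≫ F₂ X Y ≫ p (X ⊗ Y)) ≫
          (q (X ⊗ Y) ≫ Fmap (f ⊗ₘ g) ≫ p (X' ⊗ Y')) :=
  stmt_10_general γ hcocycle Fobj Fmap hF F₂ hF₂nat Ftobj p q hqp
end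

section
/- Let (F, F₂, F₀, γ) be a monoidal functor with anomaly from a strict monoidal category C to a k-linear strict monoidal category D with k-bilinear tensor product, with chosen splittings p_X, q_X of the idempotents Π_X, and let F̃₂(X,Y) := p_{X⊗Y}∘F₂(X,Y)∘(q_X⊗q_Y). Then F̃₂ satisfies the associativity coherence: for all objects X, Y, Z of C, F̃₂(X,Y⊗Z)∘(id_{F̃(X)}⊗F̃₂(Y,Z)) = F̃₂(X⊗Y,Z)∘(F̃₂(X,Y)⊗id_{F̃(Z)}). -/
/-!
Write `e_A := γ_{A,A} • F(𝟙_A) = p_A ≫ q_A`. The cocycle identity gives `γ_{𝟙,f} = γ_{𝟙,𝟙}`, so `e`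
is absorbed by every `F(f)`; monoidality of `γ` and naturality of `F₂` give
`F₂ ≫ e_{A⊗B} = (e_A ⊗ e_B) ≫ F₂`. Hence `F̃₂(A,B) ≫ q_{A⊗B} = (q_A ⊗ q_B) ≫ F₂(A,B)`: every inner
`p ≫ q` on both sides of the coherence can be erased, which reduces it to the coherence of `F₂`.
-/

open CategoryTheory MonoidalCategory

lemma smul_tensorHom_smul {R : Type*} [Semiring R] {D : Type*} [Category D] [Preadditive D]
    [Linear R D] [MonoidalCategory D] [MonoidalPreadditive D] [MonoidalLinear R D]
    {X Y X' Y' : D} (r s : R) (f : X ⟶ Y) (g : X' ⟶ Y') :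
    (r • f) ⊗ₘ (s • g) = (r * s) • (f ⊗ₘ g) := by
  rw [MonoidalCategory.tensorHom_def, MonoidalLinear.smul_whiskerRight,
    MonoidalLinear.whiskerLeft_smul, Linear.smul_comp, Linear.comp_smul, smul_smul,
    ← MonoidalCategory.tensorHom_def]

lemma cocycle_id_left {C : Type*} [Category C] {M : Type*} [Mul M] [IsLeftCancelMul M]
    {γ : ∀ {X Y Z : C}, (X ⟶ Y) → (Y ⟶ Z) → M}
    (hcocycle : ∀ {X Y Z W : C} (f : X ⟶ Y) (g : Y ⟶ Z) (h : Z ⟶ W),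
      γ f (g ≫ h) * γ g h = γ (f ≫ g) h * γ f g)
    {A B : C} (f : A ⟶ B) : γ (𝟙 A) f = γ (𝟙 A) (𝟙 A) := by
  have h := hcocycle (𝟙 A) (𝟙 A) f
  simp only [Category.id_comp] at h
  exact mul_left_cancel h

section Unitalization

variable {k : Type*} [Semiring k] {C : Type*} [Category C]
  {D : Type*} [Category D] [Preadditive D] [Linear k D]
  {γ : ∀ {X Y Z : C}, (X ⟶ Y) → (Y ⟶ Z) → kˣ}
  {Fobj : C → D} {Fmap : ∀ {X Y : C}, (X ⟶ Y) → (Fobj X ⟶ Fobj Y)}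
  {Ftobj : C → D} {p : ∀ X : C, Fobj X ⟶ Ftobj X} {q : ∀ X : C, Ftobj X ⟶ Fobj X}

lemma smul_map_id_comp
    (hcocycle : ∀ {X Y Z W : C} (f : X ⟶ Y) (g : Y ⟶ Z) (h : Z ⟶ W),
      γ f (g ≫ h) * γ g h = γ (f ≫ g) h * γ f g)
    (hF : ∀ {X Y Z : C} (f : X ⟶ Y) (g : Y ⟶ Z),
      Fmap (f ≫ g) = (γ f g : k) • (Fmap f ≫ Fmap g))
    {A B : C} (f : A ⟶ B) :
    ((γ (𝟙 A) (𝟙 A) : k) • Fmap (𝟙 A)) ≫ Fmap f = Fmap f := by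
  rw [Linear.smul_comp, ← cocycle_id_left hcocycle f, ← hF, Category.id_comp]

lemma F₂_comp_smul_map_id [MonoidalCategory C] [MonoidalCategory D] [MonoidalPreadditive D]
    [MonoidalLinear k D]
    (hγmon : ∀ {X Y Z X' Y' Z' : C} (f : X ⟶ Y) (g : Y ⟶ Z) (f' : X' ⟶ Y') (g' : Y' ⟶ Z'),
      γ (f ⊗ₘ f') (g ⊗ₘ g') = γ f g * γ f' g')
    (F₂ : ∀ X Y : C, Fobj X ⊗ Fobj Y ⟶ Fobj (X ⊗ Y))
    (hF₂nat : ∀ {X X' Y Y' : C} (f : X ⟶ X') (g : Y ⟶ Y'),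
      F₂ X Y ≫ Fmap (f ⊗ₘ g) = (Fmap f ⊗ₘ Fmap g) ≫ F₂ X' Y')
    (A B : C) :
    F₂ A B ≫ ((γ (𝟙 (A ⊗ B)) (𝟙 (A ⊗ B)) : k) • Fmap (𝟙 (A ⊗ B))) =
      (((γ (𝟙 A) (𝟙 A) : k) • Fmap (𝟙 A)) ⊗ₘ ((γ (𝟙 B) (𝟙 B) : k) • Fmap (𝟙 B))) ≫ F₂ A B := by
  have hnat := hF₂nat (𝟙 A) (𝟙 B)
  have hmon := hγmon (𝟙 A) (𝟙 A) (𝟙 B) (𝟙 B)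
  rw [id_tensorHom_id] at hnat hmon
  rw [smul_tensorHom_smul, Linear.smul_comp, Linear.comp_smul, hnat, hmon, Units.val_mul]

lemma p_comp_q_comp_map
    (hcocycle : ∀ {X Y Z W : C} (f : X ⟶ Y) (g : Y ⟶ Z) (h : Z ⟶ W),
      γ f (g ≫ h) * γ g h = γ (f ≫ g) h * γ f g)
    (hF : ∀ {X Y Z : C} (f : X ⟶ Y) (g : Y ⟶ Z),
      Fmap (f ≫ g) = (γ f g : k) • (Fmap f ≫ Fmap g))
    (hqp : ∀ X : C, p X ≫ q X = (γ (𝟙 X) (𝟙 X) : k) • Fmap (𝟙 X))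
    {A B : C} (f : A ⟶ B) : p A ≫ q A ≫ Fmap f = Fmap f := by
  rw [← Category.assoc, hqp, smul_map_id_comp hcocycle hF]

lemma tensorHom_q_comp_F₂_comp_p_comp_q [MonoidalCategory C] [MonoidalCategory D]
    [MonoidalPreadditive D] [MonoidalLinear k D]
    (hγmon : ∀ {X Y Z X' Y' Z' : C} (f : X ⟶ Y) (g : Y ⟶ Z) (f' : X' ⟶ Y') (g' : Y' ⟶ Z'),
      γ (f ⊗ₘ f') (g ⊗ₘ g') = γ f g * γ f' g')
    (F₂ : ∀ X Y : C, Fobj X ⊗ Fobj Y ⟶ Fobj (X ⊗ Y))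
    (hF₂nat : ∀ {X X' Y Y' : C} (f : X ⟶ X') (g : Y ⟶ Y'),
      F₂ X Y ≫ Fmap (f ⊗ₘ g) = (Fmap f ⊗ₘ Fmap g) ≫ F₂ X' Y')
    (hpq : ∀ X : C, q X ≫ p X = 𝟙 (Ftobj X))
    (hqp : ∀ X : C, p X ≫ q X = (γ (𝟙 X) (𝟙 X) : k) • Fmap (𝟙 X))
    (A B : C) :
    (q A ⊗ₘ q B) ≫ F₂ A B ≫ p (A ⊗ B) ≫ q (A ⊗ B) = (q A ⊗ₘ q B) ≫ F₂ A B := by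
  rw [hqp, F₂_comp_smul_map_id hγmon F₂ hF₂nat, ← hqp, ← hqp, tensorHom_comp_tensorHom_assoc,
    reassoc_of% hpq, reassoc_of% hpq]

end Unitalization

theorem stmt_11_general {k : Type*} [Field k]
    {C : Type*} [Category C] [MonoidalCategory C]
    {D : Type*} [Category D] [Preadditive D] [Linear k D] [MonoidalCategory D]
    [MonoidalPreadditive D] [MonoidalLinear k D]
    (γ : ∀ {X Y Z : C}, (X ⟶ Y) → (Y ⟶ Z) → kˣ)
    (hcocycle : ∀ {X Y Z W : C} (f : X ⟶ Y) (g : Y ⟶ Z) (h : Z ⟶ W),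
      γ f (g ≫ h) * γ g h = γ (f ≫ g) h * γ f g)
    (hγmon : ∀ {X Y Z X' Y' Z' : C} (f : X ⟶ Y) (g : Y ⟶ Z)
      (f' : X' ⟶ Y') (g' : Y' ⟶ Z'),
      γ (f ⊗ₘ f') (g ⊗ₘ g') = γ f g * γ f' g')
    (Fobj : C → D) (Fmap : ∀ {X Y : C}, (X ⟶ Y) → (Fobj X ⟶ Fobj Y))
    (hF : ∀ {X Y Z : C} (f : X ⟶ Y) (g : Y ⟶ Z),
      Fmap (f ≫ g) = (γ f g : k) • (Fmap f ≫ Fmap g))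
    (F₂ : ∀ X Y : C, Fobj X ⊗ Fobj Y ⟶ Fobj (X ⊗ Y))
    (hF₂nat : ∀ {X X' Y Y' : C} (f : X ⟶ X') (g : Y ⟶ Y'),
      F₂ X Y ≫ Fmap (f ⊗ₘ g) = (Fmap f ⊗ₘ Fmap g) ≫ F₂ X' Y')
    (hassoc : ∀ X Y Z : C,
      (F₂ X Y ⊗ₘ 𝟙 (Fobj Z)) ≫ F₂ (X ⊗ Y) Z ≫ Fmap (α_ X Y Z).hom =
        (α_ (Fobj X) (Fobj Y) (Fobj Z)).hom ≫ (𝟙 (Fobj X) ⊗ₘ F₂ Y Z) ≫ F₂ X (Y ⊗ Z))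
    (Ftobj : C → D)
    (p : ∀ X : C, Fobj X ⟶ Ftobj X) (q : ∀ X : C, Ftobj X ⟶ Fobj X)
    (hpq : ∀ X : C, q X ≫ p X = 𝟙 (Ftobj X))
    (hqp : ∀ X : C, p X ≫ q X = (γ (𝟙 X) (𝟙 X) : k) • Fmap (𝟙 X))
    :
    ∀ X Y Z : C,
      (((q X ⊗ₘ q Y) ≫ F₂ X Y ≫ p (X ⊗ Y)) ⊗ₘ 𝟙 (Ftobj Z)) ≫
          ((q (X ⊗ Y) ⊗ₘ q Z) ≫ F₂ (X ⊗ Y) Z ≫ p ((X ⊗ Y) ⊗ Z)) ≫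
          (q ((X ⊗ Y) ⊗ Z) ≫ Fmap (α_ X Y Z).hom ≫ p (X ⊗ (Y ⊗ Z))) =
        (α_ (Ftobj X) (Ftobj Y) (Ftobj Z)).hom ≫
          (𝟙 (Ftobj X) ⊗ₘ ((q Y ⊗ₘ q Z) ≫ F₂ Y Z ≫ p (Y ⊗ Z))) ≫
          ((q X ⊗ₘ q (Y ⊗ Z)) ≫ F₂ X (Y ⊗ Z) ≫ p (X ⊗ (Y ⊗ Z))) := by
  intro X Y Z
  have hF₂pq := tensorHom_q_comp_F₂_comp_p_comp_q hγmon F₂ hF₂nat hpq hqp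
  simp only [Category.assoc, tensorHom_comp_tensorHom_assoc, Category.id_comp, hF₂pq]
  calc
    _ = ((q X ⊗ₘ q Y) ⊗ₘ q Z) ≫ (F₂ X Y ⊗ₘ 𝟙 (Fobj Z)) ≫ F₂ (X ⊗ Y) Z ≫
          Fmap (α_ X Y Z).hom ≫ p (X ⊗ (Y ⊗ Z)) := by
      rw [reassoc_of% (p_comp_q_comp_map hcocycle hF hqp), tensorHom_comp_tensorHom_assoc,
        Category.comp_id]
    _ = ((q X ⊗ₘ q Y) ⊗ₘ q Z) ≫ (α_ (Fobj X) (Fobj Y) (Fobj Z)).hom ≫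
          (𝟙 (Fobj X) ⊗ₘ F₂ Y Z) ≫ F₂ X (Y ⊗ Z) ≫ p (X ⊗ (Y ⊗ Z)) := by
      rw [reassoc_of% hassoc]
    _ = _ := by
      rw [associator_naturality_assoc, tensorHom_comp_tensorHom_assoc, Category.comp_id]

/-- With `F̃(f) = p ∘ F(f) ∘ q` and
`F̃₂(X,Y) = p_{X⊗Y} ∘ F₂(X,Y) ∘ (q_X ⊗ q_Y)`, the family `F̃₂` satisfies the
associativity coherence `F̃₂(X,Y⊗Z) ∘ (id ⊗ F̃₂(Y,Z)) = F̃₂(X⊗Y,Z) ∘ (F̃₂(X,Y) ⊗ id)`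
(stated with the associators inserted, as for `F`). -/
theorem stmt_11 {k : Type*} [Field k]
    {C : Type*} [Category C] [MonoidalCategory C]
    {D : Type*} [Category D] [Preadditive D] [Linear k D] [MonoidalCategory D]
    [MonoidalPreadditive D] [MonoidalLinear k D]
    (γ : ∀ {X Y Z : C}, (X ⟶ Y) → (Y ⟶ Z) → kˣ)
    (hcocycle : ∀ {X Y Z W : C} (f : X ⟶ Y) (g : Y ⟶ Z) (h : Z ⟶ W),
      γ f (g ≫ h) * γ g h = γ (f ≫ g) h * γ f g)
    (hγmon : ∀ {X Y Z X' Y' Z' : C} (f : X ⟶ Y) (g : Y ⟶ Z)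
      (f' : X' ⟶ Y') (g' : Y' ⟶ Z'),
      γ (f ⊗ₘ f') (g ⊗ₘ g') = γ f g * γ f' g')
    (Fobj : C → D) (Fmap : ∀ {X Y : C}, (X ⟶ Y) → (Fobj X ⟶ Fobj Y))
    (hF : ∀ {X Y Z : C} (f : X ⟶ Y) (g : Y ⟶ Z),
      Fmap (f ≫ g) = (γ f g : k) • (Fmap f ≫ Fmap g))
    (F₂ : ∀ X Y : C, Fobj X ⊗ Fobj Y ⟶ Fobj (X ⊗ Y))
    (F₀ : 𝟙_ D ⟶ Fobj (𝟙_ C))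
    (hF₂nat : ∀ {X X' Y Y' : C} (f : X ⟶ X') (g : Y ⟶ Y'),
      F₂ X Y ≫ Fmap (f ⊗ₘ g) = (Fmap f ⊗ₘ Fmap g) ≫ F₂ X' Y')
    (hassoc : ∀ X Y Z : C,
      (F₂ X Y ⊗ₘ 𝟙 (Fobj Z)) ≫ F₂ (X ⊗ Y) Z ≫ Fmap (α_ X Y Z).hom =
        (α_ (Fobj X) (Fobj Y) (Fobj Z)).hom ≫ (𝟙 (Fobj X) ⊗ₘ F₂ Y Z) ≫ F₂ X (Y ⊗ Z))
    (hrunit : ∀ X : C,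
      (𝟙 (Fobj X) ⊗ₘ F₀) ≫ F₂ X (𝟙_ C) ≫ Fmap (ρ_ X).hom = (ρ_ (Fobj X)).hom)
    (hlunit : ∀ X : C,
      (F₀ ⊗ₘ 𝟙 (Fobj X)) ≫ F₂ (𝟙_ C) X ≫ Fmap (λ_ X).hom = (λ_ (Fobj X)).hom)
    (Ftobj : C → D)
    (p : ∀ X : C, Fobj X ⟶ Ftobj X) (q : ∀ X : C, Ftobj X ⟶ Fobj X)
    (hpq : ∀ X : C, q X ≫ p X = 𝟙 (Ftobj X))
    (hqp : ∀ X : C, p X ≫ q X = (γ (𝟙 X) (𝟙 X) : k) • Fmap (𝟙 X))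
    :
    ∀ X Y Z : C,
      (((q X ⊗ₘ q Y) ≫ F₂ X Y ≫ p (X ⊗ Y)) ⊗ₘ 𝟙 (Ftobj Z)) ≫
          ((q (X ⊗ Y) ⊗ₘ q Z) ≫ F₂ (X ⊗ Y) Z ≫ p ((X ⊗ Y) ⊗ Z)) ≫
          (q ((X ⊗ Y) ⊗ Z) ≫ Fmap (α_ X Y Z).hom ≫ p (X ⊗ (Y ⊗ Z))) =
        (α_ (Ftobj X) (Ftobj Y) (Ftobj Z)).hom ≫
          (𝟙 (Ftobj X) ⊗ₘ ((q Y ⊗ₘ q Z) ≫ F₂ Y Z ≫ p (Y ⊗ Z))) ≫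
          ((q X ⊗ₘ q (Y ⊗ Z)) ≫ F₂ X (Y ⊗ Z) ≫ p (X ⊗ (Y ⊗ Z))) :=
  stmt_11_general γ hcocycle hγmon Fobj Fmap hF F₂ hF₂nat hassoc Ftobj p q hpq hqp
end

section
/- Let C and D be braided (strict) monoidal categories with braidings both denoted τ, D being k-linear with k-bilinear tensor product, and let (F, F₂, F₀, γ) be a braided functor with anomaly from C to D. Then the unitalized functor F̃, with F̃₂(X,Y) := p_{X⊗Y}∘F₂(X,Y)∘(q_X⊗q_Y), is again braided: for all objects X, Y of C, F̃(τ_{X,Y})∘F̃₂(X,Y) = F̃₂(Y,X)∘(F̃(id_Y)⊗F̃(id_X))∘τ_{F̃(X),F̃(Y)}. -/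
open CategoryTheory MonoidalCategory

/-!
A 2-cocycle with values in a left-cancellative magma satisfies `γ_{𝟙,f} = γ_{𝟙,𝟙} = γ_{f,𝟙}`,
so `Π_X = γ_{X,X} • F(𝟙 X)` is a two-sided unit for `F` on morphisms. Since `p ≫ q = Π`, the
braiding identity of `F` transfers to `F̃`: on the left `Π ≫ F(τ) = F(τ)` absorbs `p ≫ q`, on the
right `F(𝟙) ≫ Π = F(𝟙)` does, and naturality of the braiding moves `q_X ⊗ q_Y` past `τ`.
-/

def IsTwoCocycle {C : Type*} [Category C] {M : Type*} [Mul M]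
    (γ : ∀ {X Y Z : C}, (X ⟶ Y) → (Y ⟶ Z) → M) : Prop :=
  ∀ {X Y Z W : C} (f : X ⟶ Y) (g : Y ⟶ Z) (h : Z ⟶ W),
    γ f (g ≫ h) * γ g h = γ (f ≫ g) h * γ f g

namespace IsTwoCocycle

variable {C : Type*} [Category C] {M : Type*} [Mul M] [IsLeftCancelMul M]
  {γ : ∀ {X Y Z : C}, (X ⟶ Y) → (Y ⟶ Z) → M}

theorem id_left (hγ : IsTwoCocycle γ) {X Y : C} (f : X ⟶ Y) :
    γ (𝟙 X) f = γ (𝟙 X) (𝟙 X) := by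
  have h := hγ (𝟙 X) (𝟙 X) f
  simp only [Category.id_comp] at h
  exact mul_left_cancel h

theorem id_right (hγ : IsTwoCocycle γ) {X Y : C} (f : X ⟶ Y) :
    γ f (𝟙 Y) = γ (𝟙 Y) (𝟙 Y) := by
  have h := hγ f (𝟙 Y) (𝟙 Y)
  simp only [Category.comp_id] at h
  exact (mul_left_cancel h).symm

end IsTwoCocycle

section AnomalousFunctor

variable {k : Type*} [Semiring k] {C : Type*} [Category C]
  {D : Type*} [Category D] [Preadditive D] [Linear k D]
  {γ : ∀ {X Y Z : C}, (X ⟶ Y) → (Y ⟶ Z) → kˣ}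
  {Fobj : C → D} {Fmap : ∀ {X Y : C}, (X ⟶ Y) → (Fobj X ⟶ Fobj Y)}

theorem smul_map_id_comp_map_s13 (hγ : IsTwoCocycle γ)
    (hF : ∀ {X Y Z : C} (f : X ⟶ Y) (g : Y ⟶ Z),
      Fmap (f ≫ g) = (γ f g : k) • (Fmap f ≫ Fmap g))
    {X Y : C} (f : X ⟶ Y) : ((γ (𝟙 X) (𝟙 X) : k) • Fmap (𝟙 X)) ≫ Fmap f = Fmap f := by
  rw [Linear.smul_comp, ← hγ.id_left f, ← hF, Category.id_comp]

theorem map_comp_smul_map_id_s13 (hγ : IsTwoCocycle γ)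
    (hF : ∀ {X Y Z : C} (f : X ⟶ Y) (g : Y ⟶ Z),
      Fmap (f ≫ g) = (γ f g : k) • (Fmap f ≫ Fmap g))
    {X Y : C} (f : X ⟶ Y) : Fmap f ≫ ((γ (𝟙 Y) (𝟙 Y) : k) • Fmap (𝟙 Y)) = Fmap f := by
  rw [Linear.comp_smul, ← hγ.id_right f, ← hF, Category.comp_id]

end AnomalousFunctor

theorem stmt_13_general {k : Type*} [Field k]
    {C : Type*} [Category C] [MonoidalCategory C] [BraidedCategory C]
    {D : Type*} [Category D] [Preadditive D] [Linear k D] [MonoidalCategory D]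
    [BraidedCategory D]
    (γ : ∀ {X Y Z : C}, (X ⟶ Y) → (Y ⟶ Z) → kˣ)
    (hcocycle : ∀ {X Y Z W : C} (f : X ⟶ Y) (g : Y ⟶ Z) (h : Z ⟶ W),
      γ f (g ≫ h) * γ g h = γ (f ≫ g) h * γ f g)
    (Fobj : C → D) (Fmap : ∀ {X Y : C}, (X ⟶ Y) → (Fobj X ⟶ Fobj Y))
    (hF : ∀ {X Y Z : C} (f : X ⟶ Y) (g : Y ⟶ Z),
      Fmap (f ≫ g) = (γ f g : k) • (Fmap f ≫ Fmap g))
    (F₂ : ∀ X Y : C, Fobj X ⊗ Fobj Y ⟶ Fobj (X ⊗ Y))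
    (Ftobj : C → D)
    (p : ∀ X : C, Fobj X ⟶ Ftobj X) (q : ∀ X : C, Ftobj X ⟶ Fobj X)
    (hqp : ∀ X : C, p X ≫ q X = (γ (𝟙 X) (𝟙 X) : k) • Fmap (𝟙 X))
    (hbraided : ∀ X Y : C,
      F₂ X Y ≫ Fmap (β_ X Y).hom =
        (β_ (Fobj X) (Fobj Y)).hom ≫ (Fmap (𝟙 Y) ⊗ₘ Fmap (𝟙 X)) ≫ F₂ Y X) :
    ∀ X Y : C,
      ((q X ⊗ₘ q Y) ≫ F₂ X Y ≫ p (X ⊗ Y)) ≫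
          (q (X ⊗ Y) ≫ Fmap (β_ X Y).hom ≫ p (Y ⊗ X)) =
        (β_ (Ftobj X) (Ftobj Y)).hom ≫
          ((q Y ≫ Fmap (𝟙 Y) ≫ p Y) ⊗ₘ (q X ≫ Fmap (𝟙 X) ≫ p X)) ≫
          ((q Y ⊗ₘ q X) ≫ F₂ Y X ≫ p (Y ⊗ X)) := by
  intro X Y
  have hpq_map {Z W : C} (f : Z ⟶ W) : p Z ≫ q Z ≫ Fmap f = Fmap f := by
    rw [← Category.assoc, hqp, smul_map_id_comp_map_s13 hcocycle hF]
  have hmap_pq {Z W : C} (f : Z ⟶ W) : Fmap f ≫ p W ≫ q W = Fmap f := by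
    rw [hqp, map_comp_smul_map_id_s13 hcocycle hF]
  calc _ = (q X ⊗ₘ q Y) ≫ F₂ X Y ≫ Fmap (β_ X Y).hom ≫ p (Y ⊗ X) := by
        simp only [Category.assoc, reassoc_of% hpq_map]
    _ = (q X ⊗ₘ q Y) ≫ (β_ (Fobj X) (Fobj Y)).hom ≫
          (Fmap (𝟙 Y) ⊗ₘ Fmap (𝟙 X)) ≫ F₂ Y X ≫ p (Y ⊗ X) := by
        rw [reassoc_of% hbraided]
    _ = _ := by
        rw [BraidedCategory.braiding_naturality_assoc]
        simp only [Category.assoc, tensorHom_comp_tensorHom_assoc, hmap_pq]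

/-- If `C` and `D` are braided and `(F, F₂, F₀, γ)` is a braided
functor with anomaly, then the unitalized functor `F̃`, with
`F̃₂(X,Y) = p_{X⊗Y} ∘ F₂(X,Y) ∘ (q_X ⊗ q_Y)`, is again braided:
`F̃(τ_{X,Y}) ∘ F̃₂(X,Y) = F̃₂(Y,X) ∘ (F̃(id_Y) ⊗ F̃(id_X)) ∘ τ_{F̃(X),F̃(Y)}`. -/
theorem stmt_13 {k : Type*} [Field k]
    {C : Type*} [Category C] [MonoidalCategory C] [BraidedCategory C]
    {D : Type*} [Category D] [Preadditive D] [Linear k D] [MonoidalCategory D]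
    [BraidedCategory D] [MonoidalPreadditive D] [MonoidalLinear k D]
    (γ : ∀ {X Y Z : C}, (X ⟶ Y) → (Y ⟶ Z) → kˣ)
    (hcocycle : ∀ {X Y Z W : C} (f : X ⟶ Y) (g : Y ⟶ Z) (h : Z ⟶ W),
      γ f (g ≫ h) * γ g h = γ (f ≫ g) h * γ f g)
    (hγmon : ∀ {X Y Z X' Y' Z' : C} (f : X ⟶ Y) (g : Y ⟶ Z)
      (f' : X' ⟶ Y') (g' : Y' ⟶ Z'),
      γ (f ⊗ₘ f') (g ⊗ₘ g') = γ f g * γ f' g')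
    (Fobj : C → D) (Fmap : ∀ {X Y : C}, (X ⟶ Y) → (Fobj X ⟶ Fobj Y))
    (hF : ∀ {X Y Z : C} (f : X ⟶ Y) (g : Y ⟶ Z),
      Fmap (f ≫ g) = (γ f g : k) • (Fmap f ≫ Fmap g))
    (F₂ : ∀ X Y : C, Fobj X ⊗ Fobj Y ⟶ Fobj (X ⊗ Y))
    (F₀ : 𝟙_ D ⟶ Fobj (𝟙_ C))
    (hF₂nat : ∀ {X X' Y Y' : C} (f : X ⟶ X') (g : Y ⟶ Y'),
      F₂ X Y ≫ Fmap (f ⊗ₘ g) = (Fmap f ⊗ₘ Fmap g) ≫ F₂ X' Y')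
    (hassoc : ∀ X Y Z : C,
      (F₂ X Y ⊗ₘ 𝟙 (Fobj Z)) ≫ F₂ (X ⊗ Y) Z ≫ Fmap (α_ X Y Z).hom =
        (α_ (Fobj X) (Fobj Y) (Fobj Z)).hom ≫ (𝟙 (Fobj X) ⊗ₘ F₂ Y Z) ≫ F₂ X (Y ⊗ Z))
    (hrunit : ∀ X : C,
      (𝟙 (Fobj X) ⊗ₘ F₀) ≫ F₂ X (𝟙_ C) ≫ Fmap (ρ_ X).hom = (ρ_ (Fobj X)).hom)
    (hlunit : ∀ X : C,
      (F₀ ⊗ₘ 𝟙 (Fobj X)) ≫ F₂ (𝟙_ C) X ≫ Fmap (λ_ X).hom = (λ_ (Fobj X)).hom)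
    (Ftobj : C → D)
    (p : ∀ X : C, Fobj X ⟶ Ftobj X) (q : ∀ X : C, Ftobj X ⟶ Fobj X)
    (hpq : ∀ X : C, q X ≫ p X = 𝟙 (Ftobj X))
    (hqp : ∀ X : C, p X ≫ q X = (γ (𝟙 X) (𝟙 X) : k) • Fmap (𝟙 X))
    (hbraided : ∀ X Y : C,
      F₂ X Y ≫ Fmap (β_ X Y).hom =
        (β_ (Fobj X) (Fobj Y)).hom ≫ (Fmap (𝟙 Y) ⊗ₘ Fmap (𝟙 X)) ≫ F₂ Y X) :
    ∀ X Y : C,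
      ((q X ⊗ₘ q Y) ≫ F₂ X Y ≫ p (X ⊗ Y)) ≫
          (q (X ⊗ Y) ≫ Fmap (β_ X Y).hom ≫ p (Y ⊗ X)) =
        (β_ (Ftobj X) (Ftobj Y)).hom ≫
          ((q Y ≫ Fmap (𝟙 Y) ≫ p Y) ⊗ₘ (q X ≫ Fmap (𝟙 X) ≫ p X)) ≫
          ((q Y ⊗ₘ q X) ≫ F₂ Y X ≫ p (Y ⊗ X)) :=
  stmt_13_general γ hcocycle Fobj Fmap hF F₂ Ftobj p q hqp hbraided
end
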